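/- For every L ≥ 0 and every probability vector ρ ∈ ℝ^n (entries nonnegative, summing to 1), the expected Monte Carlo semi-gradient of the looped L-layer Transformer at the TD parameters satisfies the quantitative bound ‖ Σ_{ω=1}^n ρ_ω ( v_ω − F_L^{(ω)}(A^TD, 0) ) g_L(ω) ‖_1 ≤ ‖v‖_∞ γ^L ( ((L² + L)/2) ν + L ξ ), where v_ω (the ω-th entry of the value vector) equals the expected Monte Carlo return from state ω, ν = 2n(n(1+γ)²‖v‖_∞ + (1+γ)²), and ξ = 2n(1+γ). -/

import Mathlib

open Matrix Filter Topology

noncomputable section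

/-- Index type for `2n` rows (two stacked copies of the feature dimension). -/
abbrev TwoN (n : ℕ) := Fin n ⊕ Fin n
/-- Row index type for prompts: `2n + 1`. -/
abbrev RIdx (n : ℕ) := TwoN n ⊕ Unit
/-- Column index type for prompts: `n + 1` (context columns plus the query column). -/
abbrev CIdx (n : ℕ) := Fin n ⊕ Unit

/-- The mask `M = [[I_n, 0],[0, 0]]`. -/
def maskM (n : ℕ) : Matrix (CIdx n) (CIdx n) ℝ := Matrix.fromBlocks 1 0 0 0

/-- One linear attention layer `Z ↦ Z + P̃ Z M (Zᵀ Q̃ Z)`. -/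
def attnLayer (n : ℕ) (Pm Qm : Matrix (RIdx n) (RIdx n) ℝ)
    (Z : Matrix (RIdx n) (CIdx n) ℝ) : Matrix (RIdx n) (CIdx n) ℝ :=
  Z + Pm * Z * maskM n * (Zᵀ * Qm * Z)

/-- `P̃ = [[0, 0],[u, 1]]`. -/
def Pmat (n : ℕ) (u : Matrix Unit (TwoN n) ℝ) : Matrix (RIdx n) (RIdx n) ℝ :=
  Matrix.fromBlocks 0 0 u 1

/-- `Q̃ = [[A, 0],[0, 0]]`. -/
def Qmat (n : ℕ) (A : Matrix (TwoN n) (TwoN n) ℝ) : Matrix (RIdx n) (RIdx n) ℝ :=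
  Matrix.fromBlocks A 0 0 0

/-- `A^TD = [[-I, I],[0, 0]]`. -/
def Atd (n : ℕ) : Matrix (TwoN n) (TwoN n) ℝ := Matrix.fromBlocks (-1) 1 0 0

/-- A row-stochastic matrix. -/
def RowStochastic {n : ℕ} (P : Matrix (Fin n) (Fin n) ℝ) : Prop :=
  (∀ i k, 0 ≤ P i k) ∧ ∀ i, ∑ k, P i k = 1

/-- TD iterates `w_0 = 0`, `w_{l+1} = r + γ P w_l`. -/
def tdW {n : ℕ} (γ : ℝ) (P : Matrix (Fin n) (Fin n) ℝ) (r : Fin n → ℝ) : ℕ → Fin n → ℝ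
  | 0 => 0
  | l + 1 => r + γ • P.mulVec (tdW γ P r l)

/-- The value vector `v = (I - γ P)⁻¹ r`. -/
def valueV {n : ℕ} (γ : ℝ) (P : Matrix (Fin n) (Fin n) ℝ) (r : Fin n → ℝ) : Fin n → ℝ :=
  ((1 : Matrix (Fin n) (Fin n) ℝ) - γ • P)⁻¹.mulVec r

/-- The prompt `Z_0(j)`: the `i`-th column is `(e_i, γ Pᵀ e_i, r_i)` and the query
column is `(e_j, 0, 0)`. -/
def prompt {n : ℕ} (γ : ℝ) (P : Matrix (Fin n) (Fin n) ℝ) (r : Fin n → ℝ) (j : Fin n) :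
    Matrix (RIdx n) (CIdx n) ℝ := fun p q =>
  match p, q with
  | Sum.inl (Sum.inl k), Sum.inl i => if k = i then 1 else 0
  | Sum.inl (Sum.inr k), Sum.inl i => γ * P i k
  | Sum.inr _, Sum.inl i => r i
  | Sum.inl (Sum.inl k), Sum.inr _ => if k = j then 1 else 0
  | Sum.inl (Sum.inr _), Sum.inr _ => 0
  | Sum.inr _, Sum.inr _ => 0

/-- Embeddings `Z_l` of the looped transformer with shared parameters `(A, u)`,
starting from the prompt `Z_0(j)`. -/
def embed {n : ℕ} (γ : ℝ) (P : Matrix (Fin n) (Fin n) ℝ) (r : Fin n → ℝ) (j : Fin n)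
    (A : Matrix (TwoN n) (TwoN n) ℝ) (u : Matrix Unit (TwoN n) ℝ) :
    ℕ → Matrix (RIdx n) (CIdx n) ℝ
  | 0 => prompt γ P r j
  | l + 1 => attnLayer n (Pmat n u) (Qmat n A) (embed γ P r j A u l)

/-- Looped `L`-layer transformer output `F_L^{(j)}(A, u) = -(Z_L)_{2n+1, n+1}`. -/
def tfOut {n : ℕ} (γ : ℝ) (P : Matrix (Fin n) (Fin n) ℝ) (r : Fin n → ℝ) (j : Fin n)
    (A : Matrix (TwoN n) (TwoN n) ℝ) (u : Matrix Unit (TwoN n) ℝ) (L : ℕ) : ℝ :=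
  -(embed γ P r j A u L (Sum.inr ()) (Sum.inr ()))

/-- `TF_L(Z_0(j); θ_L^TD)`: the transformer output with the TD parameters. -/
def tfTD {n : ℕ} (γ : ℝ) (P : Matrix (Fin n) (Fin n) ℝ) (r : Fin n → ℝ) (j : Fin n) (L : ℕ) : ℝ :=
  tfOut γ P r j (Atd n) 0 L

/-- `X ∈ ℝ^{2n×n}`: the `i`-th column is `(e_i, γ Pᵀ e_i)`. -/
def Xmat {n : ℕ} (γ : ℝ) (P : Matrix (Fin n) (Fin n) ℝ) : Matrix (TwoN n) (Fin n) ℝ :=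
  fun p i => match p with
  | Sum.inl k => if k = i then 1 else 0
  | Sum.inr k => γ * P i k

/-- The query vector `x^q = (e_ω, 0) ∈ ℝ^{2n}`. -/
def xqv {n : ℕ} (ω : Fin n) : TwoN n → ℝ := fun p =>
  match p with
  | Sum.inl k => if k = ω then 1 else 0
  | Sum.inr _ => 0

/-- Operator norm induced by the ℓ1 vector norm: maximum absolute column sum. -/
def matL1 {m k : Type*} [Fintype m] [Fintype k] (B : Matrix m k ℝ) : ℝ :=
  ⨆ j, ∑ i, |B i j|

/-- `G_0^{(i)} = 0`, `G_{l+1}^{(i)} = X (r - w_l) (X e_i)ᵀ + γ Σ_j P_{ij} G_l^{(j)}`. -/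
def Gseq {n : ℕ} (γ : ℝ) (P : Matrix (Fin n) (Fin n) ℝ) (r : Fin n → ℝ) :
    ℕ → Fin n → Matrix (TwoN n) (TwoN n) ℝ
  | 0 => fun _ => 0
  | l + 1 => fun i =>
      Matrix.vecMulVec ((Xmat γ P).mulVec (r - tdW γ P r l)) ((Xmat γ P).mulVec (Pi.single i 1))
        + γ • ∑ j, P i j • Gseq γ P r l j

/-- `H_0 = 0`, `H_{l+1} = H_l + X (r - w_l) (x^q)ᵀ - G_l^{(ω)}`. -/
def Hseq {n : ℕ} (γ : ℝ) (P : Matrix (Fin n) (Fin n) ℝ) (r : Fin n → ℝ) (ω : Fin n) :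
    ℕ → Matrix (TwoN n) (TwoN n) ℝ
  | 0 => 0
  | l + 1 => Hseq γ P r ω l
      + Matrix.vecMulVec ((Xmat γ P).mulVec (r - tdW γ P r l)) (xqv ω)
      - Gseq γ P r l ω

/-- `U_0 = 0`, `U_{l+1} = X Xᵀ A^TD X + γ U_l Pᵀ`. -/
def Useq {n : ℕ} (γ : ℝ) (P : Matrix (Fin n) (Fin n) ℝ) : ℕ → Matrix (TwoN n) (Fin n) ℝ
  | 0 => 0
  | l + 1 => Xmat γ P * (Xmat γ P)ᵀ * Atd n * Xmat γ P + γ • (Useq γ P l * Pᵀ)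

/-- `h_0 = 0`, `h_{l+1} = h_l + X Xᵀ A^TD x^q + U_l Xᵀ A^TD x^q`. -/
def hseq {n : ℕ} (γ : ℝ) (P : Matrix (Fin n) (Fin n) ℝ) (ω : Fin n) : ℕ → TwoN n → ℝ
  | 0 => 0
  | l + 1 => hseq γ P ω l
      + (Xmat γ P * (Xmat γ P)ᵀ * Atd n).mulVec (xqv ω)
      + (Useq γ P l * (Xmat γ P)ᵀ * Atd n).mulVec (xqv ω)

/-- `g_L(j)`: the vector of all partial derivatives of `F_L^{(j)}` with respect to the
entries of `A` and of `u`, evaluated at the TD parameters `(A^TD, 0)`. -/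
def gvec {n : ℕ} (γ : ℝ) (P : Matrix (Fin n) (Fin n) ℝ) (r : Fin n → ℝ) (L : ℕ) (j : Fin n) :
    (TwoN n × TwoN n) ⊕ TwoN n → ℝ
  | Sum.inl ab => deriv (fun t : ℝ =>
      tfOut γ P r j (Atd n + t • Matrix.single ab.1 ab.2 1) 0 L) 0
  | Sum.inr k => deriv (fun t : ℝ =>
      tfOut γ P r j (Atd n) (t • Matrix.single () k 1) L) 0

/-!
Each attention layer leaves the top `2n` rows `Y = [[I, e_ω], [γPᵀ, 0]]` of the prompt unchanged
and maps its bottom row `b` to `b S + u Y (S - 1)` with `S = 1 + M Yᵀ A Y`, so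
`F_L(A, u) = -(b₀ S^L + u Y (S^L - 1))_{n+1}`. At `A = A^TD` the matrix `S` is
`[[γPᵀ, -e_ω], [0, 1]]`; its powers are explicit and the output is the TD iterate
`w_L(ω) = Σ_{m<L} ((γP)^m r)_ω`, whence `|v_ω - F_L| ≤ γ^L ‖v‖_∞`. Differentiating `S^L` gives
`g_L` as a sum over `m < L` of rank-one terms. Their ℓ¹ norms are bounded using that the columns
of `Y` have ℓ¹ norm at most `1 + γ`, that `‖(γP)^m r‖_∞ ≤ ‖r‖_∞ ≤ (1 + γ)‖v‖_∞`, and that the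
last column of `S^k - 1` has ℓ¹ norm at most `k`; summing over `m` produces `(L² + L)/2`.
-/

theorem sum_abs_mulVec_le {ι κ : Type*} [Fintype ι] [Fintype κ] {A : Matrix ι κ ℝ} {c : ℝ}
    (hA : ∀ j, ∑ i, |A i j| ≤ c) (x : κ → ℝ) : ∑ i, |(A *ᵥ x) i| ≤ c * ∑ j, |x j| :=
  calc ∑ i, |(A *ᵥ x) i| ≤ ∑ i, ∑ j, |A i j| * |x j| := by
        gcongr with i
        exact (Finset.abs_sum_le_sum_abs _ _).trans_eq (by simp only [abs_mul])
    _ = ∑ j, (∑ i, |A i j|) * |x j| := by rw [Finset.sum_comm]; simp only [Finset.sum_mul]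
    _ ≤ ∑ j, c * |x j| := by gcongr with j; exact hA j
    _ = c * ∑ j, |x j| := Finset.mul_sum _ _ _ |>.symm

theorem sum_abs_sum_mul_le {α β : Type*} [Fintype α] [Fintype β] (s : Finset ℕ)
    (x : ℕ → α → ℝ) (y : ℕ → β → ℝ) :
    ∑ ab : α × β, |∑ m ∈ s, x m ab.1 * y m ab.2|
      ≤ ∑ m ∈ s, (∑ a, |x m a|) * ∑ b, |y m b| :=
  calc ∑ ab : α × β, |∑ m ∈ s, x m ab.1 * y m ab.2|
      ≤ ∑ ab : α × β, ∑ m ∈ s, |x m ab.1| * |y m ab.2| := by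
        gcongr with ab
        exact (Finset.abs_sum_le_sum_abs _ _).trans_eq (by simp only [abs_mul])
    _ = ∑ m ∈ s, (∑ a, |x m a|) * ∑ b, |y m b| := by
        rw [Finset.sum_comm]
        simp only [Finset.sum_mul_sum, Fintype.sum_prod_type]

theorem sum_abs_sum_mul_le_of_weights {ι κ : Type*} [Fintype ι] [Fintype κ] {ρ c : ι → ℝ}
    {g : ι → κ → ℝ} {C B : ℝ} (hρ0 : ∀ i, 0 ≤ ρ i) (hρ1 : ∑ i, ρ i = 1)
    (hc : ∀ i, |c i| ≤ C) (hg : ∀ i, ∑ k, |g i k| ≤ B) :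
    ∑ k, |∑ i, ρ i * c i * g i k| ≤ C * B :=
  calc ∑ k, |∑ i, ρ i * c i * g i k| ≤ ∑ k, ∑ i, ρ i * (|c i| * |g i k|) := by
        gcongr with k
        refine (Finset.abs_sum_le_sum_abs _ _).trans_eq ?_
        simp only [abs_mul, abs_of_nonneg (hρ0 _), mul_assoc]
    _ = ∑ i, ρ i * (|c i| * ∑ k, |g i k|) := by
        rw [Finset.sum_comm]; simp only [Finset.mul_sum]
    _ ≤ ∑ i, ρ i * (C * B) := Finset.sum_le_sum fun i _ => mul_le_mul_of_nonneg_left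
        (mul_le_mul (hc i) (hg i) (Finset.sum_nonneg fun _ _ => abs_nonneg _)
          ((abs_nonneg _).trans (hc i))) (hρ0 i)
    _ = C * B := by rw [← Finset.sum_mul, hρ1, one_mul]

theorem sum_range_reflect_add_one (L : ℕ) :
    ∑ m ∈ Finset.range L, (((L - 1 - m : ℕ) : ℝ) + 1) = ((L : ℝ) ^ 2 + L) / 2 := by
  rw [Finset.sum_range_reflect (fun j => (j : ℝ) + 1) L]
  induction L with
  | zero => simp
  | succ L ih => rw [Finset.sum_range_succ, ih]; push_cast; ring

theorem Matrix.fromBlocks_zero_one_pow {ι κ α : Type*} [Fintype ι] [DecidableEq ι] [Fintype κ]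
    [DecidableEq κ] [Semiring α] (A : Matrix ι ι α) (B : Matrix ι κ α) (k : ℕ) :
    fromBlocks A B 0 (1 : Matrix κ κ α) ^ k =
      fromBlocks (A ^ k) ((∑ m ∈ Finset.range k, A ^ m) * B) 0 1 := by
  induction k with
  | zero => simp [fromBlocks_one]
  | succ k ih =>
    rw [pow_succ', ih, fromBlocks_multiply, geom_sum_succ, pow_succ']
    simp [Matrix.add_mul, Matrix.mul_assoc]

theorem Matrix.mul_single_one_mul_apply {ι κ μ ν α : Type*} [Fintype κ] [DecidableEq κ]
    [Fintype μ] [DecidableEq μ] [Semiring α] (X : Matrix ι κ α) (Z : Matrix μ ν α) (a : κ)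
    (b : μ) (i : ι) (j : ν) : (X * single a b (1 : α) * Z) i j = X i a * Z b j := by
  simp [Matrix.mul_apply, Matrix.single, ite_and, Finset.sum_ite_eq]

section Derivatives

variable {𝕜 ι κ μ : Type*} [NontriviallyNormedField 𝕜] [Fintype κ]

theorem hasDerivAt_matrix_mul_apply {f : 𝕜 → Matrix ι κ 𝕜} {g : 𝕜 → Matrix κ μ 𝕜}
    {f' : Matrix ι κ 𝕜} {g' : Matrix κ μ 𝕜} {t : 𝕜}
    (hf : ∀ i j, HasDerivAt (fun s => f s i j) (f' i j) t)
    (hg : ∀ i j, HasDerivAt (fun s => g s i j) (g' i j) t) (i : ι) (j : μ) :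
    HasDerivAt (fun s => (f s * g s) i j) ((f' * g t + f t * g') i j) t := by
  simp only [Matrix.mul_apply, Matrix.add_apply, ← Finset.sum_add_distrib]
  exact HasDerivAt.fun_sum fun c _ => (hf i c).mul (hg c j)

theorem hasDerivAt_pow_add_smul_apply [DecidableEq κ] (S T : Matrix κ κ 𝕜) (L : ℕ) (i j : κ) :
    HasDerivAt (fun t : 𝕜 => ((S + t • T) ^ L) i j)
      ((∑ m ∈ Finset.range L, S ^ m * T * S ^ (L - 1 - m)) i j) 0 := by
  induction L generalizing i j with
  | zero => simpa using hasDerivAt_const (0 : 𝕜) ((1 : Matrix κ κ 𝕜) i j)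
  | succ L ih =>
    have hlin (i j : κ) : HasDerivAt (fun t : 𝕜 => (S + t • T) i j) (T i j) 0 := by
      simpa using ((hasDerivAt_id (0 : 𝕜)).mul_const (T i j)).const_add (S i j)
    convert hasDerivAt_matrix_mul_apply hlin ih i j using 2
    · simp [pow_succ']
    · refine congrFun (congrFun ?_ i) j
      rw [Finset.sum_range_succ', Matrix.mul_sum, add_comm]
      simp only [zero_smul, add_zero, pow_zero, Matrix.one_mul, Nat.add_sub_cancel, tsub_zero]
      refine congrArg (T * S ^ L + ·) (Finset.sum_congr rfl fun m _ => ?_)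
      rw [show L - (m + 1) = L - 1 - m by omega, pow_succ']
      simp only [Matrix.mul_assoc]

end Derivatives

namespace RowStochastic

variable {n : ℕ} {γ : ℝ} {P : Matrix (Fin n) (Fin n) ℝ}

theorem norm_mulVec_le (hP : RowStochastic P) (x : Fin n → ℝ) : ‖P *ᵥ x‖ ≤ ‖x‖ := by
  refine (pi_norm_le_iff_of_nonneg (norm_nonneg x)).2 fun i => ?_
  calc ‖(P *ᵥ x) i‖ = ‖∑ j, P i j * x j‖ := rfl
    _ ≤ ∑ j, ‖P i j * x j‖ := norm_sum_le _ _
    _ ≤ ∑ j, P i j * ‖x‖ := by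
        gcongr with j
        rw [norm_mul, Real.norm_of_nonneg (hP.1 i j)]
        exact mul_le_mul_of_nonneg_left (norm_le_pi_norm x j) (hP.1 i j)
    _ = ‖x‖ := by rw [← Finset.sum_mul, hP.2 i, one_mul]

theorem norm_smul_mulVec_le (hP : RowStochastic P) (hγ0 : 0 ≤ γ) (x : Fin n → ℝ) :
    ‖(γ • P) *ᵥ x‖ ≤ γ * ‖x‖ := by
  rw [Matrix.smul_mulVec, norm_smul, Real.norm_of_nonneg hγ0]
  exact mul_le_mul_of_nonneg_left (hP.norm_mulVec_le x) hγ0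

theorem norm_pow_mulVec_le (hP : RowStochastic P) (hγ0 : 0 ≤ γ) (k : ℕ)
    (x : Fin n → ℝ) : ‖(γ • P) ^ k *ᵥ x‖ ≤ γ ^ k * ‖x‖ := by
  induction k with
  | zero => simp
  | succ k ih =>
    rw [pow_succ', ← Matrix.mulVec_mulVec, pow_succ', mul_assoc]
    exact (hP.norm_smul_mulVec_le hγ0 _).trans (mul_le_mul_of_nonneg_left ih hγ0)

theorem isUnit_det_one_sub_smul (hP : RowStochastic P) (hγ0 : 0 ≤ γ) (hγ1 : γ < 1) :
    IsUnit (1 - γ • P).det := by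
  refine isUnit_iff_ne_zero.2 fun hdet => ?_
  obtain ⟨x, hx0, hx⟩ := Matrix.exists_mulVec_eq_zero_iff.2 hdet
  rw [Matrix.sub_mulVec, Matrix.one_mulVec, sub_eq_zero] at hx
  have : ‖x‖ ≤ γ * ‖x‖ := by simpa only [← hx] using hP.norm_smul_mulVec_le hγ0 x
  exact hx0 (norm_le_zero_iff.1 (by nlinarith [norm_nonneg x]))

theorem sum_abs_smul_transpose_apply (hP : RowStochastic P) (hγ0 : 0 ≤ γ)
    (j : Fin n) : ∑ i, |(γ • P)ᵀ i j| = γ := by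
  simp only [transpose_apply, Matrix.smul_apply, smul_eq_mul, abs_mul, abs_of_nonneg hγ0,
    abs_of_nonneg (hP.1 j _), ← Finset.mul_sum, hP.2 j, mul_one]

theorem sum_abs_transpose_pow_mulVec_le (hP : RowStochastic P) (hγ0 : 0 ≤ γ)
    (hγ1 : γ ≤ 1) (m : ℕ) (x : Fin n → ℝ) :
    ∑ i, |((γ • P)ᵀ ^ m *ᵥ x) i| ≤ ∑ i, |x i| := by
  induction m with
  | zero => simp
  | succ m ih =>
    rw [pow_succ', ← Matrix.mulVec_mulVec]
    refine (sum_abs_mulVec_le (fun j => (hP.sum_abs_smul_transpose_apply hγ0 j).le) _).trans ?_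
    exact (mul_le_of_le_one_left (Finset.sum_nonneg fun _ _ => abs_nonneg _) hγ1).trans ih

end RowStochastic

section LoopedTransformer

variable {n : ℕ} {γ : ℝ} {P : Matrix (Fin n) (Fin n) ℝ} {r : Fin n → ℝ} {ω : Fin n}

theorem valueV_sub_smul_mulVec (hP : RowStochastic P) (hγ0 : 0 ≤ γ) (hγ1 : γ < 1) :
    valueV γ P r - (γ • P) *ᵥ valueV γ P r = r := by
  have h := congrArg (· *ᵥ r) (Matrix.mul_nonsing_inv _ (hP.isUnit_det_one_sub_smul hγ0 hγ1))
  simpa only [valueV, ← Matrix.mulVec_mulVec, Matrix.one_mulVec, Matrix.sub_mulVec] using h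

theorem tdW_eq_sum (k : ℕ) : tdW γ P r k = ∑ m ∈ Finset.range k, (γ • P) ^ m *ᵥ r := by
  induction k with
  | zero => rfl
  | succ k ih =>
    rw [tdW, ih, Finset.sum_range_succ', ← Matrix.smul_mulVec, Matrix.mulVec_sum, add_comm]
    simp [pow_succ', Matrix.mulVec_mulVec]

theorem norm_valueV_sub_tdW_le (hP : RowStochastic P) (hγ0 : 0 ≤ γ) (hγ1 : γ < 1) (k : ℕ) :
    ‖valueV γ P r - tdW γ P r k‖ ≤ γ ^ k * ‖valueV γ P r‖ := by
  induction k with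
  | zero => simp [tdW]
  | succ k ih =>
    have hstep : valueV γ P r - tdW γ P r (k + 1) = (γ • P) *ᵥ (valueV γ P r - tdW γ P r k) :=
      calc valueV γ P r - tdW γ P r (k + 1)
          = (valueV γ P r - (γ • P) *ᵥ valueV γ P r) + (γ • P) *ᵥ valueV γ P r
              - tdW γ P r (k + 1) := by abel
        _ = (γ • P) *ᵥ (valueV γ P r - tdW γ P r k) := by
          rw [valueV_sub_smul_mulVec hP hγ0 hγ1, tdW, Matrix.mulVec_sub]
          simp only [Matrix.smul_mulVec]
          abel
    rw [hstep, pow_succ', mul_assoc]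
    exact (hP.norm_smul_mulVec_le hγ0 _).trans (mul_le_mul_of_nonneg_left ih hγ0)

theorem norm_reward_le (hP : RowStochastic P) (hγ0 : 0 ≤ γ) (hγ1 : γ < 1) :
    ‖r‖ ≤ (1 + γ) * ‖valueV γ P r‖ := by
  have h := norm_sub_le (valueV γ P r) ((γ • P) *ᵥ valueV γ P r)
  rw [valueV_sub_smul_mulVec hP hγ0 hγ1] at h
  linarith [hP.norm_smul_mulVec_le hγ0 (valueV γ P r)]

def featureBlock (γ : ℝ) (P : Matrix (Fin n) (Fin n) ℝ) (ω : Fin n) :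
    Matrix (TwoN n) (CIdx n) ℝ :=
  fromBlocks 1 (replicateCol Unit (Pi.single ω (1 : ℝ))) (γ • P)ᵀ 0

def rewardRow (r : Fin n → ℝ) : Matrix Unit (CIdx n) ℝ := fromCols (replicateRow Unit r) 0

def layerMatrix (γ : ℝ) (P : Matrix (Fin n) (Fin n) ℝ) (ω : Fin n)
    (A : Matrix (TwoN n) (TwoN n) ℝ) : Matrix (CIdx n) (CIdx n) ℝ :=
  1 + maskM n * ((featureBlock γ P ω)ᵀ * A * featureBlock γ P ω)

theorem prompt_eq_fromRows :
    prompt γ P r ω = fromRows (featureBlock γ P ω) (rewardRow r) := by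
  ext ((k | k) | _) (i | _) <;>
    simp [prompt, featureBlock, rewardRow, Matrix.one_apply, Pi.single_apply, eq_comm]

theorem attnLayer_fromRows (A : Matrix (TwoN n) (TwoN n) ℝ) (u : Matrix Unit (TwoN n) ℝ)
    (b : Matrix Unit (CIdx n) ℝ) :
    attnLayer n (Pmat n u) (Qmat n A) (fromRows (featureBlock γ P ω) b) =
      fromRows (featureBlock γ P ω)
        (b * layerMatrix γ P ω A + u * featureBlock γ P ω * (layerMatrix γ P ω A - 1)) := by
  set Y := featureBlock γ P ω
  have hPZ : Pmat n u * fromRows Y b = fromRows 0 (u * Y + b) := by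
    simp [Pmat, fromBlocks_mul_fromRows]
  have hZQZ : (fromRows Y b)ᵀ * Qmat n A * fromRows Y b = Yᵀ * A * Y := by
    simp [Qmat, transpose_fromRows, fromCols_mul_fromBlocks, fromCols_mul_fromRows]
  rw [attnLayer, hPZ, hZQZ, fromRows_mul, fromRows_mul]
  ext (i | i) j
  · simp
  · simp only [fromRows_apply_inr, Matrix.add_apply, layerMatrix, add_sub_cancel_left,
      Matrix.mul_add, Matrix.mul_one, Matrix.add_mul, Matrix.mul_assoc]
    ring

theorem embed_eq_fromRows (A : Matrix (TwoN n) (TwoN n) ℝ) (u : Matrix Unit (TwoN n) ℝ)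
    (l : ℕ) :
    embed γ P r ω A u l = fromRows (featureBlock γ P ω)
      (rewardRow r * layerMatrix γ P ω A ^ l
        + u * featureBlock γ P ω * (layerMatrix γ P ω A ^ l - 1)) := by
  induction l with
  | zero => simp [embed, prompt_eq_fromRows]
  | succ l ih =>
    rw [embed, ih, attnLayer_fromRows, pow_succ]
    congr 1
    simp only [Matrix.add_mul, Matrix.sub_mul, Matrix.mul_sub, Matrix.one_mul, Matrix.mul_assoc]
    abel

theorem tfOut_eq (A : Matrix (TwoN n) (TwoN n) ℝ) (u : Matrix Unit (TwoN n) ℝ) (L : ℕ) :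
    tfOut γ P r ω A u L =
      -((rewardRow r * layerMatrix γ P ω A ^ L
        + u * featureBlock γ P ω * (layerMatrix γ P ω A ^ L - 1) :
          Matrix Unit (CIdx n) ℝ) () (Sum.inr ())) := by
  rw [tfOut, embed_eq_fromRows, fromRows_apply_inr]

def tdStep (γ : ℝ) (P : Matrix (Fin n) (Fin n) ℝ) (ω : Fin n) : Matrix (CIdx n) (CIdx n) ℝ :=
  fromBlocks (γ • P)ᵀ (-replicateCol Unit (Pi.single ω (1 : ℝ))) 0 1

theorem layerMatrix_Atd : layerMatrix γ P ω (Atd n) = tdStep γ P ω := by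
  simp [layerMatrix, featureBlock, tdStep, Atd, maskM, fromBlocks_transpose, fromBlocks_multiply,
    ← fromBlocks_one, fromBlocks_add]

theorem tdStep_pow (k : ℕ) :
    tdStep γ P ω ^ k = fromBlocks ((γ • P)ᵀ ^ k)
      (-((∑ m ∈ Finset.range k, (γ • P)ᵀ ^ m) * replicateCol Unit (Pi.single ω (1 : ℝ)))) 0 1 := by
  rw [tdStep, Matrix.fromBlocks_zero_one_pow, Matrix.mul_neg]

theorem rewardRow_mul_tdStep_pow (k : ℕ) :
    rewardRow r * tdStep γ P ω ^ k =
      fromCols (replicateRow Unit ((γ • P) ^ k *ᵥ r))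
        (replicateRow Unit (fun _ => -tdW γ P r k ω)) := by
  rw [tdStep_pow, rewardRow, fromCols_mul_fromBlocks, tdW_eq_sum, ← Matrix.sum_mulVec]
  simp only [← transpose_pow, ← transpose_sum, Matrix.zero_mul, add_zero, Matrix.mul_neg,
    ← Matrix.mul_assoc, ← replicateRow_vecMul, vecMul_transpose]
  congr 1
  ext
  simp [vecMul, dotProduct_single]

theorem tfTD_eq_tdW (L : ℕ) : tfTD γ P r ω L = tdW γ P r L ω := by
  simp [tfTD, tfOut_eq, layerMatrix_Atd, rewardRow_mul_tdStep_pow]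

theorem layerMatrix_add_smul (A E : Matrix (TwoN n) (TwoN n) ℝ) (t : ℝ) :
    layerMatrix γ P ω (A + t • E) = layerMatrix γ P ω A
      + t • (maskM n * ((featureBlock γ P ω)ᵀ * E * featureBlock γ P ω)) := by
  simp only [layerMatrix, Matrix.mul_add, Matrix.add_mul, Matrix.mul_smul, Matrix.smul_mul,
    add_assoc]

theorem gvec_inl_eq (L : ℕ) (a b : TwoN n) :
    gvec γ P r L ω (Sum.inl (a, b)) =
      -∑ m ∈ Finset.range L,
        (featureBlock γ P ω *ᵥ (rewardRow r * tdStep γ P ω ^ m * maskM n) ()) a *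
          (featureBlock γ P ω *ᵥ fun c => (tdStep γ P ω ^ (L - 1 - m)) c (Sum.inr ())) b := by
  set Y := featureBlock γ P ω
  set S := tdStep γ P ω
  set T := maskM n * (Yᵀ * single a b (1 : ℝ) * Y)
  have hout : (fun t : ℝ => tfOut γ P r ω (Atd n + t • single a b 1) 0 L) =
      fun t => -(rewardRow r * (S + t • T) ^ L) () (Sum.inr ()) := by
    funext t
    rw [tfOut_eq, layerMatrix_add_smul, layerMatrix_Atd, Matrix.zero_mul, Matrix.zero_mul,
      add_zero]
  have hderiv := hasDerivAt_matrix_mul_apply (f := fun _ => rewardRow r) (f' := 0)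
    (fun _ _ => hasDerivAt_const _ _) (hasDerivAt_pow_add_smul_apply S T L) () (Sum.inr ())
  rw [gvec, hout, hderiv.fun_neg.deriv, Matrix.zero_mul, zero_add, Matrix.mul_sum, Matrix.sum_apply]
  refine congrArg Neg.neg (Finset.sum_congr rfl fun m _ => ?_)
  rw [show rewardRow r * (S ^ m * T * S ^ (L - 1 - m)) =
      rewardRow r * S ^ m * maskM n * Yᵀ * single a b (1 : ℝ) * (Y * S ^ (L - 1 - m)) by
    simp only [T, Matrix.mul_assoc], Matrix.mul_single_one_mul_apply]
  simp [Matrix.mul_apply, Matrix.mulVec, dotProduct, mul_comm]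

theorem gvec_inr_eq (L : ℕ) (k : TwoN n) :
    gvec γ P r L ω (Sum.inr k) =
      -(featureBlock γ P ω *ᵥ fun c => (tdStep γ P ω ^ L - 1) c (Sum.inr ())) k := by
  have hout : (fun t : ℝ => tfOut γ P r ω (Atd n) (t • single () k 1) L) =
      fun t => -(rewardRow r * tdStep γ P ω ^ L) () (Sum.inr ())
        + t * -(featureBlock γ P ω *ᵥ fun c => (tdStep γ P ω ^ L - 1) c (Sum.inr ())) k := by
    funext t
    rw [tfOut_eq, layerMatrix_Atd, Matrix.smul_mul, Matrix.smul_mul, Matrix.add_apply,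
      Matrix.smul_apply, Matrix.mul_assoc, Matrix.single_mul_apply_same, one_mul, smul_eq_mul,
      neg_add, mul_neg]
    rfl
  rw [gvec, hout]
  exact (((hasDerivAt_id (0 : ℝ)).mul_const _).const_add _).deriv.trans (one_mul _)

theorem sum_abs_featureBlock_apply_le (hP : RowStochastic P) (hγ0 : 0 ≤ γ) (c : CIdx n) :
    ∑ a, |featureBlock γ P ω a c| ≤ 1 + γ := by
  rw [Fintype.sum_sum_type]
  rcases c with i | _
  · simp only [featureBlock, fromBlocks_apply₁₁, fromBlocks_apply₂₁,
      hP.sum_abs_smul_transpose_apply hγ0 i]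
    simp [Matrix.one_apply, apply_ite]
  · simp [featureBlock, Pi.single_apply, apply_ite, hγ0]

theorem sum_abs_tdStep_pow_sub_one_apply_le (hP : RowStochastic P) (hγ0 : 0 ≤ γ)
    (hγ1 : γ ≤ 1) (k : ℕ) :
    ∑ c, |(tdStep γ P ω ^ k - 1) c (Sum.inr ())| ≤ k := by
  have hcol (i : Fin n) : (tdStep γ P ω ^ k - 1) (Sum.inl i) (Sum.inr ()) =
      -(∑ m ∈ Finset.range k, (γ • P)ᵀ ^ m *ᵥ Pi.single ω 1) i := by
    rw [tdStep_pow, Matrix.sub_apply, fromBlocks_apply₁₂, Matrix.neg_apply,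
      ← replicateCol_mulVec, replicateCol_apply, ← Matrix.sum_mulVec]
    simp
  have hcorner : (tdStep γ P ω ^ k - 1) (Sum.inr ()) (Sum.inr ()) = 0 := by
    rw [tdStep_pow, Matrix.sub_apply, fromBlocks_apply₂₂]
    simp
  calc ∑ c, |(tdStep γ P ω ^ k - 1) c (Sum.inr ())|
      = ∑ i, |∑ m ∈ Finset.range k, ((γ • P)ᵀ ^ m *ᵥ Pi.single ω 1) i| := by
        simp only [Fintype.sum_sum_type, Fintype.sum_unique, hcol, hcorner,
          abs_neg, abs_zero, add_zero, Finset.sum_apply]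
    _ ≤ ∑ m ∈ Finset.range k, ∑ i, |((γ • P)ᵀ ^ m *ᵥ Pi.single ω 1) i| := by
        rw [Finset.sum_comm]
        exact Finset.sum_le_sum fun i _ => Finset.abs_sum_le_sum_abs _ _
    _ ≤ ∑ m ∈ Finset.range k, (1 : ℝ) := by
        gcongr with m
        refine (hP.sum_abs_transpose_pow_mulVec_le hγ0 hγ1 m _).trans_eq ?_
        simp [Pi.single_apply, apply_ite]
    _ = k := by simp

theorem sum_abs_tdStep_pow_apply_le (hP : RowStochastic P) (hγ0 : 0 ≤ γ) (hγ1 : γ ≤ 1)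
    (k : ℕ) : ∑ c, |(tdStep γ P ω ^ k) c (Sum.inr ())| ≤ k + 1 := by
  have hone : ∑ c : CIdx n, |(1 : Matrix (CIdx n) (CIdx n) ℝ) c (Sum.inr ())| = 1 := by
    simp [Fintype.sum_sum_type]
  calc ∑ c, |(tdStep γ P ω ^ k) c (Sum.inr ())|
      ≤ ∑ c, (|(tdStep γ P ω ^ k - 1) c (Sum.inr ())|
          + |(1 : Matrix (CIdx n) (CIdx n) ℝ) c (Sum.inr ())|) :=
        Finset.sum_le_sum fun c _ =>
          (abs_add_le _ _).trans_eq' (by rw [Matrix.sub_apply, sub_add_cancel])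
    _ ≤ k + 1 := by
        rw [Finset.sum_add_distrib, hone]
        linarith [sum_abs_tdStep_pow_sub_one_apply_le (ω := ω) hP hγ0 hγ1 k]

theorem sum_abs_rewardRow_mul_tdStep_pow_mul_maskM_le (hP : RowStochastic P) (hγ0 : 0 ≤ γ)
    (hγ1 : γ ≤ 1) (k : ℕ) :
    ∑ c, |(rewardRow r * tdStep γ P ω ^ k * maskM n) () c| ≤ n * ‖r‖ := by
  have hentry (j : Fin n) : |((γ • P) ^ k *ᵥ r) j| ≤ ‖r‖ :=
    calc |((γ • P) ^ k *ᵥ r) j| ≤ ‖(γ • P) ^ k *ᵥ r‖ := by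
          simpa only [Real.norm_eq_abs] using norm_le_pi_norm ((γ • P) ^ k *ᵥ r) j
      _ ≤ γ ^ k * ‖r‖ := hP.norm_pow_mulVec_le hγ0 k r
      _ ≤ ‖r‖ := mul_le_of_le_one_left (norm_nonneg r) (pow_le_one₀ hγ0 hγ1)
  rw [rewardRow_mul_tdStep_pow, maskM, fromCols_mul_fromBlocks, Fintype.sum_sum_type]
  simpa using Finset.sum_le_card_nsmul Finset.univ _ _ fun j _ => hentry j

theorem sum_abs_gvec_inl_le (hP : RowStochastic P) (hγ0 : 0 ≤ γ) (hγ1 : γ ≤ 1) (L : ℕ) :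
    ∑ ab : TwoN n × TwoN n, |gvec γ P r L ω (Sum.inl ab)|
      ≤ (1 + γ) ^ 2 * (n * ‖r‖) * (((L : ℝ) ^ 2 + L) / 2) := by
  have hY := sum_abs_mulVec_le (sum_abs_featureBlock_apply_le (ω := ω) hP hγ0)
  calc ∑ ab : TwoN n × TwoN n, |gvec γ P r L ω (Sum.inl ab)|
      = ∑ ab : TwoN n × TwoN n, |∑ m ∈ Finset.range L,
          (featureBlock γ P ω *ᵥ (rewardRow r * tdStep γ P ω ^ m * maskM n) ()) ab.1 *
          (featureBlock γ P ω *ᵥ fun c => (tdStep γ P ω ^ (L - 1 - m)) c (Sum.inr ())) ab.2| :=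
        Finset.sum_congr rfl fun ab _ => (congrArg abs (gvec_inl_eq L ab.1 ab.2)).trans (abs_neg _)
    _ ≤ ∑ m ∈ Finset.range L, ((1 + γ) * (n * ‖r‖)) * ((1 + γ) * (((L - 1 - m : ℕ) : ℝ) + 1)) := by
        refine (sum_abs_sum_mul_le _ _ _).trans (Finset.sum_le_sum fun m _ => ?_)
        gcongr
        · exact (hY _).trans (mul_le_mul_of_nonneg_left
            (sum_abs_rewardRow_mul_tdStep_pow_mul_maskM_le hP hγ0 hγ1 m) (by positivity))
        · exact (hY _).trans (mul_le_mul_of_nonneg_left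
            (sum_abs_tdStep_pow_apply_le hP hγ0 hγ1 _) (by positivity))
    _ = (1 + γ) ^ 2 * (n * ‖r‖) * (((L : ℝ) ^ 2 + L) / 2) := by
        rw [← sum_range_reflect_add_one, Finset.mul_sum]
        exact Finset.sum_congr rfl fun m _ => by ring

theorem sum_abs_gvec_inr_le (hP : RowStochastic P) (hγ0 : 0 ≤ γ) (hγ1 : γ ≤ 1) (L : ℕ) :
    ∑ k : TwoN n, |gvec γ P r L ω (Sum.inr k)| ≤ (1 + γ) * L := by
  simp only [gvec_inr_eq, abs_neg]
  exact (sum_abs_mulVec_le (sum_abs_featureBlock_apply_le hP hγ0) _).trans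
    (mul_le_mul_of_nonneg_left (sum_abs_tdStep_pow_sub_one_apply_le hP hγ0 hγ1 L) (by positivity))

theorem sum_abs_gvec_le (hP : RowStochastic P) (hγ0 : 0 ≤ γ) (hγ1 : γ < 1) (L : ℕ) :
    ∑ idx, |gvec γ P r L ω idx|
      ≤ (((L : ℝ) ^ 2 + L) / 2) *
          (2 * (n : ℝ) * ((n : ℝ) * (1 + γ) ^ 2 * ‖valueV γ P r‖ + (1 + γ) ^ 2))
        + (L : ℝ) * (2 * (n : ℝ) * (1 + γ)) := by
  have hn : (1 : ℝ) ≤ n := by exact_mod_cast ω.pos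
  have hv := norm_nonneg (valueV γ P r)
  have hr : ‖r‖ ≤ 2 * n * ‖valueV γ P r‖ :=
    (norm_reward_le hP hγ0 hγ1).trans (mul_le_mul_of_nonneg_right (by linarith) hv)
  have hA : (1 + γ) ^ 2 * (n * ‖r‖) ≤
      2 * n * (n * (1 + γ) ^ 2 * ‖valueV γ P r‖ + (1 + γ) ^ 2) :=
    calc (1 + γ) ^ 2 * (n * ‖r‖) ≤ (1 + γ) ^ 2 * (n * (2 * n * ‖valueV γ P r‖)) := by gcongr
      _ ≤ 2 * n * (n * (1 + γ) ^ 2 * ‖valueV γ P r‖) + 2 * n * (1 + γ) ^ 2 := by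
        nlinarith [mul_nonneg (Nat.cast_nonneg n : (0 : ℝ) ≤ n) (sq_nonneg (1 + γ))]
      _ = _ := by ring
  rw [Fintype.sum_sum_type]
  refine (add_le_add (sum_abs_gvec_inl_le hP hγ0 hγ1.le L)
    (sum_abs_gvec_inr_le hP hγ0 hγ1.le L)).trans (add_le_add ?_ ?_)
  · rw [mul_comm]
    exact mul_le_mul_of_nonneg_left hA (by positivity)
  · rw [mul_comm]
    exact mul_le_mul_of_nonneg_left (by nlinarith) (Nat.cast_nonneg L)

end LoopedTransformer

theorem stmt18_general (n : ℕ) (γ : ℝ) (hγ0 : 0 ≤ γ) (hγ1 : γ < 1)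
    (P : Matrix (Fin n) (Fin n) ℝ) (hP : RowStochastic P) (r : Fin n → ℝ)
    (L : ℕ) (ρ : Fin n → ℝ) (hρ0 : ∀ ω, 0 ≤ ρ ω) (hρ1 : ∑ ω, ρ ω = 1) :
    ∑ idx : (TwoN n × TwoN n) ⊕ TwoN n,
        |∑ ω, (ρ ω * (valueV γ P r ω - tfTD γ P r ω L)) * gvec γ P r L ω idx|
      ≤ ‖valueV γ P r‖ * γ ^ L *
          ((((L : ℝ) ^ 2 + L) / 2) *
              (2 * (n : ℝ) * ((n : ℝ) * (1 + γ) ^ 2 * ‖valueV γ P r‖ + (1 + γ) ^ 2))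
            + (L : ℝ) * (2 * (n : ℝ) * (1 + γ))) := by
  have htd (ω : Fin n) : |valueV γ P r ω - tfTD γ P r ω L| ≤ γ ^ L * ‖valueV γ P r‖ := by
    rw [tfTD_eq_tdW, ← Pi.sub_apply, ← Real.norm_eq_abs]
    exact (norm_le_pi_norm _ ω).trans (norm_valueV_sub_tdW_le hP hγ0 hγ1 L)
  rw [mul_comm ‖valueV γ P r‖]
  exact sum_abs_sum_mul_le_of_weights hρ0 hρ1 htd fun ω => sum_abs_gvec_le hP hγ0 hγ1 L

/-- quantitative bound on the expected Monte Carlo semi-gradient of the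
looped L-layer transformer at the TD parameters. -/
theorem stmt18 (n : ℕ) (hn : 1 ≤ n) (γ : ℝ) (hγ0 : 0 ≤ γ) (hγ1 : γ < 1)
    (P : Matrix (Fin n) (Fin n) ℝ) (hP : RowStochastic P) (r : Fin n → ℝ)
    (L : ℕ) (ρ : Fin n → ℝ) (hρ0 : ∀ ω, 0 ≤ ρ ω) (hρ1 : ∑ ω, ρ ω = 1) :
    ∑ idx : (TwoN n × TwoN n) ⊕ TwoN n,
        |∑ ω, (ρ ω * (valueV γ P r ω - tfTD γ P r ω L)) * gvec γ P r L ω idx|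
      ≤ ‖valueV γ P r‖ * γ ^ L *
          ((((L : ℝ) ^ 2 + L) / 2) *
              (2 * (n : ℝ) * ((n : ℝ) * (1 + γ) ^ 2 * ‖valueV γ P r‖ + (1 + γ) ^ 2))
            + (L : ℝ) * (2 * (n : ℝ) * (1 + γ))) :=
  stmt18_general n γ hγ0 hγ1 P hP r L ρ hρ0 hρ1

end
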